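/- arXiv:0810.1747 — 6 statements merged into one kernel-verified Lean document; each statement's English description precedes it below -/
import Mathlib

section
/- Let A and B be pointed subsets of [n], and define ε_A : [n] → [n] by ε_A(i) = max{ j ∈ A : j ≤ i }, and similarly ε_B. Then there exists N₀ such that for all N ≥ N₀, the N-fold composite (ε_A ∘ ε_B)^N equals ε_{A∩B}. -/
/-- `ε_A : [n] → [n]`, `ε_A i = max { j ∈ A | j ≤ i }` for a pointed subset `A ⊆ [n]`. -/
def epsA {n : ℕ} (A : Finset (Fin (n + 1))) (h0 : (0 : Fin (n + 1)) ∈ A)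
    (i : Fin (n + 1)) : Fin (n + 1) :=
  Finset.max' (A.filter fun j => j ≤ i)
    ⟨0, Finset.mem_filter.mpr ⟨h0, Fin.zero_le i⟩⟩

lemma epsA_spec {n : ℕ} (A : Finset (Fin (n + 1))) (h0 : (0 : Fin (n + 1)) ∈ A)
    (i : Fin (n + 1)) : epsA A h0 i ∈ A.filter fun j => j ≤ i :=
  Finset.max'_mem (A.filter fun j => j ≤ i)
    ⟨0, Finset.mem_filter.mpr ⟨h0, Fin.zero_le i⟩⟩

lemma epsA_mem {n : ℕ} (A : Finset (Fin (n + 1))) (h0 : (0 : Fin (n + 1)) ∈ A)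
    (i : Fin (n + 1)) : epsA A h0 i ∈ A :=
  (Finset.mem_filter.mp (epsA_spec A h0 i)).1

lemma epsA_le {n : ℕ} (A : Finset (Fin (n + 1))) (h0 : (0 : Fin (n + 1)) ∈ A)
    (i : Fin (n + 1)) : epsA A h0 i ≤ i :=
  (Finset.mem_filter.mp (epsA_spec A h0 i)).2

lemma le_epsA {n : ℕ} (A : Finset (Fin (n + 1))) (h0 : (0 : Fin (n + 1)) ∈ A)
    {i j : Fin (n + 1)} (hj : j ∈ A) (hji : j ≤ i) : j ≤ epsA A h0 i :=
  Finset.le_max' (A.filter fun k => k ≤ i) j (Finset.mem_filter.mpr ⟨hj, hji⟩)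

lemma epsA_of_mem {n : ℕ} (A : Finset (Fin (n + 1))) (h0 : (0 : Fin (n + 1)) ∈ A)
    {i : Fin (n + 1)} (hi : i ∈ A) : epsA A h0 i = i :=
  le_antisymm (epsA_le A h0 i) (le_epsA A h0 hi le_rfl)

lemma epsA_mono {n : ℕ} (A : Finset (Fin (n + 1))) (h0 : (0 : Fin (n + 1)) ∈ A) :
    Monotone (epsA A h0) := by
  intro i j hij
  exact le_epsA A h0 (epsA_mem A h0 i) ((epsA_le A h0 i).trans hij)

/-- If `A` and `B` are pointed subsets of `[n]`, then for all sufficiently large `N` the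
`N`-fold composite `(ε_A ∘ ε_B)^N` equals `ε_{A ∩ B}`. -/
theorem epsA_comp_epsB_iterate {n : ℕ} (A B : Finset (Fin (n + 1)))
    (h0A : (0 : Fin (n + 1)) ∈ A) (h0B : (0 : Fin (n + 1)) ∈ B) :
    ∃ N₀ : ℕ, ∀ N ≥ N₀,
      (epsA A h0A ∘ epsA B h0B)^[N] =
        epsA (A ∩ B) (Finset.mem_inter.mpr ⟨h0A, h0B⟩) := by
  set f : Fin (n + 1) → Fin (n + 1) := epsA A h0A ∘ epsA B h0B with hf
  have hle : ∀ x, f x ≤ x := fun x =>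
    (epsA_le A h0A _).trans (epsA_le B h0B x)
  have hmono : Monotone f := (epsA_mono A h0A).comp (epsA_mono B h0B)
  have hfix_of_mem : ∀ x ∈ A ∩ B, f x = x := by
    intro x hx
    obtain ⟨hxA, hxB⟩ := Finset.mem_inter.mp hx
    simp only [hf, Function.comp_apply, epsA_of_mem B h0B hxB, epsA_of_mem A h0A hxA]
  have hmem_of_fix : ∀ x, f x = x → x ∈ A ∩ B := by
    intro x hx
    simp only [hf, Function.comp_apply] at hx
    have h1 : epsA B h0B x ≤ x := epsA_le B h0B x
    have h2 : x ≤ epsA B h0B x := by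
      calc x = epsA A h0A (epsA B h0B x) := hx.symm
        _ ≤ epsA B h0B x := epsA_le A h0A (epsA B h0B x)
    have hB : epsA B h0B x = x := le_antisymm h1 h2
    have hxB : x ∈ B := hB ▸ epsA_mem B h0B x
    have hxA : x ∈ A := by
      rw [hB] at hx
      rw [← hx]; exact epsA_mem A h0A x
    exact Finset.mem_inter.mpr ⟨hxA, hxB⟩
  -- after n+1 steps we reach a fixed point
  have key : ∀ (k : ℕ) (i : Fin (n + 1)),
      f (f^[k] i) = f^[k] i ∨ (f^[k] i).val + k ≤ i.val := by
    intro k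
    induction k with
    | zero => intro i; right; simp
    | succ k ih =>
      intro i
      rcases ih i with h | h
      · left
        rw [Function.iterate_succ_apply', h, h]
      · by_cases hfx : f (f^[k] i) = f^[k] i
        · left; rw [Function.iterate_succ_apply', hfx, hfx]
        · right
          have hlt : f (f^[k] i) < f^[k] i := lt_of_le_of_ne (hle _) hfx
          rw [Function.iterate_succ_apply']
          have : (f (f^[k] i)).val + 1 ≤ (f^[k] i).val := hlt
          omega
  have hfixN : ∀ i, f (f^[n + 1] i) = f^[n + 1] i := by
    intro i
    rcases key (n + 1) i with h | h
    · exact h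
    · exfalso; have := i.isLt; omega
  refine ⟨n + 1, fun N hN => ?_⟩
  funext i
  have hstab : f^[N] i = f^[n + 1] i := by
    obtain ⟨m, rfl⟩ := Nat.exists_eq_add_of_le hN
    rw [Nat.add_comm (n + 1) m, Function.iterate_add_apply,
      Function.iterate_fixed (hfixN i)]
  rw [hstab]
  set x := f^[n + 1] i with hx
  have hxmem : x ∈ A ∩ B := hmem_of_fix x (hfixN i)
  have hxle : x ≤ i := by
    have : ∀ k, f^[k] i ≤ i := by
      intro k
      induction k with
      | zero => simp
      | succ k ih => rw [Function.iterate_succ_apply']; exact (hle _).trans ih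
    exact this (n + 1)
  have hge : epsA (A ∩ B) (Finset.mem_inter.mpr ⟨h0A, h0B⟩) i ≤ x := by
    have : ∀ k, epsA (A ∩ B) (Finset.mem_inter.mpr ⟨h0A, h0B⟩) i ≤ f^[k] i := by
      intro k
      induction k with
      | zero => simpa using epsA_le _ _ i
      | succ k ih =>
        rw [Function.iterate_succ_apply']
        calc epsA (A ∩ B) (Finset.mem_inter.mpr ⟨h0A, h0B⟩) i
            = f (epsA (A ∩ B) (Finset.mem_inter.mpr ⟨h0A, h0B⟩) i) :=
              (hfix_of_mem _ (epsA_mem _ _ i)).symm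
          _ ≤ f (f^[k] i) := hmono ih
    exact this (n + 1)
  exact le_antisymm (le_epsA _ _ hxmem hxle) hge
end

section
/- Let K be a field of characteristic zero and I a finite nonempty set with |I| = n+1. The K-linear functional ∫_I on the polynomial ring K[t_i : i ∈ I], defined on monomials by ∫_I ∏_i t_i^{ν_i} = (∏_i ν_i!)/(n + ∑_i ν_i)!, vanishes on the ideal generated by 1 − ∑_{i∈I} t_i. Equivalently, ∫_I (1 − ∑_{i∈I} t_i)·f = 0 for every polynomial f, so ∫_I factors through the quotient ring P_I = K[t_i : i∈I]/(1 − ∑_i t_i). -/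
/-- The linear functional `∫_I` on `K[t_i : i ∈ I]` determined on monomials by
`∫_I ∏ t_i^{ν_i} = (∏ ν_i!) / (n + ∑ ν_i)!`. -/
noncomputable def simplexIntegral (K : Type*) [Field K] [CharZero K] {I : Type*}
    [Fintype I] (n : ℕ) (f : MvPolynomial I K) : K :=
  ∑ ν ∈ f.support, f.coeff ν *
    (((∏ i, Nat.factorial (ν i) : ℕ) : K) /
      ((Nat.factorial (n + ∑ i, ν i) : ℕ) : K))

/-!
Multiplying the monomial `t^ν` by `t_i` raises `ν_i` and the total degree `|ν|` by one, so its
weight `(∏ ν_j!) / (n + |ν|)!` gets multiplied by `(ν_i + 1) / (n + |ν| + 1)`. Summing over the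
`n + 1` indices `i`, these factors add up to `1`, hence `∫_I t^ν = ∑_i ∫_I t_i t^ν`, which is the
claim for `f = t^ν`; the general case follows by linearity.
-/

open MvPolynomial Finset

section Weight

variable {K : Type*} [Field K] {I : Type*} [Fintype I]

variable (K) in
noncomputable def simplexWeight (n : ℕ) (ν : I →₀ ℕ) : K :=
  (((∏ i, Nat.factorial (ν i) : ℕ) : K) / ((Nat.factorial (n + ∑ i, ν i) : ℕ) : K))

theorem sum_add_single_one_apply [DecidableEq I] (ν : I →₀ ℕ) (i : I) :
    ∑ j, (ν + Finsupp.single i 1 : I →₀ ℕ) j = ∑ j, ν j + 1 := by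
  simp [sum_add_distrib]

theorem prod_factorial_add_single_one_apply [DecidableEq I] (ν : I →₀ ℕ) (i : I) :
    ∏ j, Nat.factorial ((ν + Finsupp.single i 1 : I →₀ ℕ) j) =
      (ν i + 1) * ∏ j, Nat.factorial (ν j) := by
  rw [← mul_prod_erase univ _ (mem_univ i), ← mul_prod_erase univ _ (mem_univ i), ← mul_assoc]
  congr 1
  · simp [Nat.factorial_succ]
  · refine prod_congr rfl fun j hj => ?_
    simp [(ne_of_mem_erase hj).symm]

theorem simplexWeight_add_single_one [DecidableEq I] (n : ℕ) (ν : I →₀ ℕ) (i : I) :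
    simplexWeight K n (ν + Finsupp.single i 1) =
      (ν i + 1) * simplexWeight K n ν / (n + ∑ j, ν j + 1 : ℕ) := by
  rw [simplexWeight, simplexWeight, sum_add_single_one_apply, prod_factorial_add_single_one_apply,
    ← add_assoc, Nat.factorial_succ, Nat.cast_mul, Nat.cast_mul, mul_div_mul_comm]
  push_cast
  ring

theorem sum_simplexWeight_add_single_one [CharZero K] [DecidableEq I] {n : ℕ}
    (hcard : Fintype.card I = n + 1) (ν : I →₀ ℕ) :
    ∑ i, simplexWeight K n (ν + Finsupp.single i 1) = simplexWeight K n ν := by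
  have hdeg : ∑ i, ((ν i : K) + 1) = (n + ∑ j, ν j + 1 : ℕ) := by
    rw [sum_add_distrib, sum_const, card_univ, hcard]
    push_cast
    ring
  have hne : ((n + ∑ j, ν j + 1 : ℕ) : K) ≠ 0 := Nat.cast_ne_zero.mpr (Nat.succ_ne_zero _)
  simp_rw [simplexWeight_add_single_one, ← sum_div, ← sum_mul]
  rw [hdeg, mul_div_cancel_left₀ _ hne]

theorem one_sub_sum_X_mul_monomial (ν : I →₀ ℕ) (c : K) :
    (1 - ∑ i, X i) * monomial ν c = monomial ν c - ∑ i, monomial (ν + Finsupp.single i 1) c := by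
  simp_rw [sub_mul, one_mul, sum_mul, X, monomial_mul, one_mul, add_comm]

end Weight

section Integral

variable (K : Type*) [Field K] [CharZero K] {I : Type*} [Fintype I]

noncomputable def simplexIntegralLinearMap (n : ℕ) : MvPolynomial I K →ₗ[K] K :=
  Finsupp.linearCombination K (simplexWeight K n) ∘ₗ
    (AddMonoidAlgebra.coeffLinearEquiv K).toLinearMap

variable {K}

theorem simplexIntegralLinearMap_apply (n : ℕ) (f : MvPolynomial I K) :
    simplexIntegralLinearMap K n f = simplexIntegral K n f := by
  rw [simplexIntegralLinearMap, LinearMap.comp_apply, Finsupp.linearCombination_apply,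
    Finsupp.sum]
  rfl

theorem simplexIntegral_monomial (n : ℕ) (ν : I →₀ ℕ) (c : K) :
    simplexIntegral K n (monomial ν c) = c * simplexWeight K n ν := by
  rw [← simplexIntegralLinearMap_apply, simplexIntegralLinearMap, LinearMap.comp_apply]
  exact Finsupp.linearCombination_single K c ν

theorem simplexIntegral_one_sub_sum_X_mul_monomial {n : ℕ} (hcard : Fintype.card I = n + 1)
    (ν : I →₀ ℕ) (c : K) :
    simplexIntegral K n ((1 - ∑ i, X i) * monomial ν c) = 0 := by
  classical
  simp_rw [one_sub_sum_X_mul_monomial, ← simplexIntegralLinearMap_apply, map_sub, map_sum,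
    simplexIntegralLinearMap_apply, simplexIntegral_monomial, ← mul_sum,
    sum_simplexWeight_add_single_one hcard, sub_self]

end Integral

theorem simplexIntegral_well_defined_general (K : Type*) [Field K] [CharZero K]
    (I : Type*) [Fintype I] (n : ℕ) (hcard : Fintype.card I = n + 1)
    (f : MvPolynomial I K) :
    simplexIntegral K n ((1 - ∑ i, MvPolynomial.X i) * f) = 0 := by
  have hzero : simplexIntegralLinearMap K n ∘ₗ
      LinearMap.mulLeft K (1 - ∑ i, X i : MvPolynomial I K) = 0 := by
    refine linearMap_ext fun ν => LinearMap.ext_ring ?_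
    rw [LinearMap.comp_apply, LinearMap.comp_apply, LinearMap.mulLeft_apply,
      simplexIntegralLinearMap_apply, LinearMap.zero_comp, LinearMap.zero_apply]
    exact simplexIntegral_one_sub_sum_X_mul_monomial hcard ν 1
  rw [← simplexIntegralLinearMap_apply]
  exact LinearMap.congr_fun hzero f

/-- `∫_I` vanishes on the ideal generated by `1 - ∑ t_i`:
`∫_I (1 - ∑ t_i) · f = 0` for every polynomial `f`. -/
theorem simplexIntegral_well_defined (K : Type*) [Field K] [CharZero K]
    (I : Type*) [Fintype I] [Nonempty I] (n : ℕ) (hcard : Fintype.card I = n + 1)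
    (f : MvPolynomial I K) :
    simplexIntegral K n ((1 - ∑ i, MvPolynomial.X i) * f) = 0 :=
  simplexIntegral_well_defined_general K I n hcard f
end

section
/- For any n ≥ 0 and any multi-index (ν_0, ν_1, …, ν_n) ∈ ℕ^{n+1}, the Lebesgue integral over the set Δ'_n = { x ∈ ℝ^n : x_i ≥ 0 for all i, and ∑_{i=1}^n x_i ≤ 1 } satisfies ∫_{Δ'_n} (1 − ∑_{i=1}^n x_i)^{ν_0} · ∏_{i=1}^n x_i^{ν_i} dx_1⋯dx_n = (∏_{i=0}^n ν_i!)/(n + ∑_{i=0}^n ν_i)!. -/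
/-!
Slice off the first coordinate: over `y ∈ Δ'_n` the fibre of `Δ'_{n+1}` is the segment
`0 ≤ t ≤ s := 1 - ∑ y`, and since `1 - ∑ x = s - t` the integral over it is the Beta integral
`∫₀ˢ t^a (s - t)^b dt = a! b! / (a + b + 1)! · s^(a + b + 1)`. This leaves an integral over `Δ'_n`
of the same shape with the exponent of `1 - ∑ y` raised, so the formula follows by induction on
`n` with that exponent arbitrary.
-/

open MeasureTheory Set
open scoped Nat

theorem integral_pow_mul_sub_pow (p q : ℕ) {a : ℝ} (ha : 0 ≤ a) :
    ∫ x in 0..a, x ^ p * (a - x) ^ q = (p ! * q ! : ℝ) / (p + q + 1)! * a ^ (p + q + 1) := by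
  rcases ha.eq_or_lt with rfl | ha
  · simp
  have hB := Complex.betaIntegral_scaled (p + 1) (q + 1) ha
  rw [Complex.betaIntegral_eq_Gamma_mul_div _ _ (by simp; positivity) (by simp; positivity)] at hB
  have hsum : ((p : ℂ) + 1 + (q + 1)) = ((p + q + 1 : ℕ) : ℂ) + 1 := by push_cast; ring
  simp only [add_sub_cancel_right, hsum, Complex.Gamma_nat_eq_factorial,
    Complex.cpow_natCast] at hB
  apply Complex.ofReal_injective
  rw [← intervalIntegral.integral_ofReal]
  push_cast
  rw [hB]
  ring

theorem integral_eq_integral_integral_cons {E : Type*} [NormedAddCommGroup E] [NormedSpace ℝ E]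
    {n : ℕ} {f : (Fin (n + 1) → ℝ) → E} (hf : Integrable f) :
    ∫ x, f x = ∫ y : Fin n → ℝ, ∫ t : ℝ, f (Fin.cons t y) := by
  have he := (volume_preserving_piFinSuccAbove (fun _ : Fin (n + 1) => ℝ) 0).symm
  rw [← he.integral_comp', Measure.volume_eq_prod, integral_prod_symm]
  · simp [MeasurableEquiv.piFinSuccAbove_symm_apply, Fin.insertNthEquiv, Fin.insertNth_zero']
  · exact (he.integrable_comp_emb (MeasurableEquiv.measurableEmbedding _)).2 hf

/-- The paper's `Δ'_n`. -/
def cornerSimplex (n : ℕ) : Set (Fin n → ℝ) := {x | (∀ i, 0 ≤ x i) ∧ ∑ i, x i ≤ 1}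

theorem isCompact_cornerSimplex (n : ℕ) : IsCompact (cornerSimplex n) := by
  refine (isCompact_Icc (a := (0 : Fin n → ℝ)) (b := 1)).of_isClosed_subset ?_ ?_
  · simp only [cornerSimplex, ofPred_and, ofPred_forall]
    exact (isClosed_iInter fun i => isClosed_le continuous_const (continuous_apply i)).inter
      (isClosed_le (by fun_prop) continuous_const)
  · rintro x ⟨hx0, hx1⟩
    exact ⟨hx0, fun i => (Finset.single_le_sum (fun j _ => hx0 j) (Finset.mem_univ i)).trans hx1⟩

theorem cons_mem_cornerSimplex_iff {n : ℕ} (t : ℝ) (y : Fin n → ℝ) :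
    Fin.cons t y ∈ cornerSimplex (n + 1) ↔
      y ∈ cornerSimplex n ∧ t ∈ Icc 0 (1 - ∑ i, y i) := by
  simp only [cornerSimplex, mem_ofPred_eq, Fin.forall_fin_succ, Fin.sum_univ_succ, Fin.cons_zero,
    Fin.cons_succ, mem_Icc]
  constructor
  · rintro ⟨⟨ht, hy⟩, hsum⟩
    exact ⟨⟨hy, by linarith⟩, ht, by linarith⟩
  · rintro ⟨⟨hy, -⟩, ht, hsum⟩
    exact ⟨⟨ht, hy⟩, by linarith⟩

theorem setIntegral_cornerSimplex_succ {E : Type*} [NormedAddCommGroup E] [NormedSpace ℝ E]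
    {n : ℕ} {f : (Fin (n + 1) → ℝ) → E} (hf : IntegrableOn f (cornerSimplex (n + 1))) :
    ∫ x in cornerSimplex (n + 1), f x =
      ∫ y in cornerSimplex n, ∫ t in 0..1 - ∑ i, y i, f (Fin.cons t y) := by
  classical
  have hmeas (m : ℕ) := (isCompact_cornerSimplex m).isClosed.measurableSet
  rw [← integral_indicator (hmeas _), ← integral_indicator (hmeas _),
    integral_eq_integral_integral_cons ((integrable_indicator_iff (hmeas _)).2 hf)]
  congr 1 with y
  by_cases hy : y ∈ cornerSimplex n
  · have hs : 0 ≤ 1 - ∑ i, y i := sub_nonneg.2 hy.2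
    simp only [indicator_of_mem hy, intervalIntegral.integral_of_le hs,
      ← integral_Icc_eq_integral_Ioc, ← integral_indicator measurableSet_Icc]
    congr 1 with t
    simp only [indicator_apply, cons_mem_cornerSimplex_iff, hy, true_and]
  · simp [cons_mem_cornerSimplex_iff, hy]

theorem integral_cornerSimplex_one_sub_sum_pow_mul_prod_pow (n k : ℕ) (κ : Fin n → ℕ) :
    ∫ x in cornerSimplex n, (1 - ∑ i, x i) ^ k * ∏ i, x i ^ κ i =
      (k ! * ∏ i, ((κ i)! : ℝ)) / (n + k + ∑ i, κ i)! := by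
  induction n generalizing k with
  | zero =>
    have huniv : cornerSimplex 0 = univ := by ext; simp [cornerSimplex]
    simp [huniv, measureReal_def, volume_pi, k.factorial_ne_zero]
  | succ n ih =>
    have hint : IntegrableOn (fun x : Fin (n + 1) → ℝ => (1 - ∑ i, x i) ^ k * ∏ i, x i ^ κ i)
        (cornerSimplex (n + 1)) :=
      (Continuous.continuousOn (by fun_prop)).integrableOn_compact (isCompact_cornerSimplex _)
    have hslice : ∀ y ∈ cornerSimplex n,
        ∫ t in 0..1 - ∑ i, y i, (1 - ∑ i, (Fin.cons t y : Fin (n + 1) → ℝ) i) ^ k *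
            ∏ i, (Fin.cons t y : Fin (n + 1) → ℝ) i ^ κ i =
          (κ 0)! * k ! / (κ 0 + k + 1)! *
            ((1 - ∑ i, y i) ^ (κ 0 + k + 1) * ∏ i, y i ^ κ i.succ) := by
      intro y hy
      set s := 1 - ∑ i, y i
      simp only [Fin.sum_univ_succ, Fin.prod_univ_succ, Fin.cons_zero, Fin.cons_succ]
      calc _ = (∫ t in 0..s, t ^ κ 0 * (s - t) ^ k) * ∏ i, y i ^ κ i.succ := by
            rw [← intervalIntegral.integral_mul_const]
            congr 1 with t
            ring
        _ = _ := by
            rw [integral_pow_mul_sub_pow _ _ (sub_nonneg.2 hy.2)]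
            ring
    have hdeg : n + (κ 0 + k + 1) + ∑ i : Fin n, κ i.succ =
        n + 1 + k + (κ 0 + ∑ i : Fin n, κ i.succ) := by ring
    rw [setIntegral_cornerSimplex_succ hint,
      setIntegral_congr_fun (isCompact_cornerSimplex n).isClosed.measurableSet hslice,
      integral_const_mul, ih, Fin.prod_univ_succ, Fin.sum_univ_succ, hdeg]
    field_simp

/-- The Lebesgue integral of `(1 - ∑ x_i)^{ν_0} ∏ x_i^{ν_i}` over the standard simplex
`Δ'_n = { x ∈ ℝ^n | x_i ≥ 0, ∑ x_i ≤ 1 }` equals `(∏ ν_i!) / (n + ∑ ν_i)!`. -/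
theorem integral_monomial_simplex (n : ℕ) (ν : Fin (n + 1) → ℕ) :
    ∫ x in {x : Fin n → ℝ | (∀ i, 0 ≤ x i) ∧ ∑ i, x i ≤ 1},
        (1 - ∑ i, x i) ^ ν 0 * ∏ i : Fin n, x i ^ ν i.succ =
      ((∏ i, Nat.factorial (ν i) : ℕ) : ℝ) /
        ((Nat.factorial (n + ∑ i, ν i) : ℕ) : ℝ) := by
  rw [Fin.prod_univ_succ, Fin.sum_univ_succ, ← add_assoc]
  push_cast
  exact integral_cornerSimplex_one_sub_sum_pow_mul_prod_pow n (ν 0) fun i => ν i.succ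
end

section
/- For any n ≥ 1 and any multi-index (ν_1,…,ν_n) ∈ ℕ^n, the Lebesgue integral over the ordered simplex { s ∈ ℝ^n : 0 ≤ s_1 ≤ s_2 ≤ ⋯ ≤ s_n ≤ 1 } satisfies ∫_{0 ≤ s_1 ≤ ⋯ ≤ s_n ≤ 1} ∏_{k=1}^n s_k^{ν_k} ds_1⋯ds_n = 1/∏_{k=1}^n μ_k, where μ_k = ∑_{j=1}^k (ν_j + 1). -/
/-!
Peel off the largest coordinate: the slice `s_n = x` of the ordered simplex of side `c` is the
ordered simplex of side `x` in one dimension less. By Fubini and induction on `n`, the integral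
over the simplex of side `c` is `c ^ μ_n / ∏ μ_k`, the inductive step being
`∫₀ᶜ x ^ (ν_n + μ_{n-1}) dx / ∏_{k<n} μ_k = c ^ μ_n / (μ_n ∏_{k<n} μ_k)`.
-/

open MeasureTheory Set

namespace Fin

variable {α : Type*} {n : ℕ}

theorem monotone_snoc_iff [Preorder α] {t : Fin n → α} {x : α} :
    Monotone (snoc t x : Fin (n + 1) → α) ↔ Monotone t ∧ ∀ i, t i ≤ x := by
  refine ⟨fun h => ⟨fun i j hij => ?_, fun i => ?_⟩, fun ⟨ht, hx⟩ i j hij => ?_⟩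
  · simpa using h (castSucc_le_castSucc_iff.2 hij)
  · simpa using h (le_last i.castSucc)
  · induction j using lastCases with
    | last => induction i using lastCases <;> simp [hx]
    | cast j =>
      induction i using lastCases with
      | last => exact absurd hij (not_le.2 (castSucc_lt_last j))
      | cast i => simpa using ht (castSucc_le_castSucc_iff.1 hij)

theorem integral_snoc {E : Type*} [NormedAddCommGroup E] [NormedSpace ℝ E] [MeasureSpace α]
    [SigmaFinite (volume : Measure α)] {f : (Fin (n + 1) → α) → E} (hf : Integrable f) :
    ∫ s, f s = ∫ x, ∫ t, f (snoc t x) := by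
  have he := (volume_preserving_piFinSuccAbove (fun _ : Fin (n + 1) => α) (last n)).symm
  have hsnoc : ⇑(MeasurableEquiv.piFinSuccAbove (fun _ => α) (last n)).symm =
      fun p : α × (Fin n → α) => snoc p.2 p.1 := by
    ext p : 1
    simp [MeasurableEquiv.piFinSuccAbove_symm_apply, insertNthEquiv, insertNth_last']
  rw [← he.integral_comp', hsnoc, Measure.volume_eq_prod, integral_prod]
  have := (he.integrable_comp_emb (MeasurableEquiv.measurableEmbedding _)).2 hf
  rwa [hsnoc, Measure.volume_eq_prod] at this

theorem prod_sum_Iic_succ {R : Type*} [CommSemiring R] (f : Fin (n + 1) → R) :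
    ∏ k, ∑ j ∈ Finset.Iic k, f j =
      (∏ k : Fin n, ∑ j ∈ Finset.Iic k, f j.castSucc) * ∑ j, f j := by
  rw [prod_univ_castSucc]
  simp_rw [sum_Iic_castSucc]
  congr
  ext
  simp [le_last]

end Fin

def orderedSimplex (n : ℕ) (c : ℝ) : Set (Fin n → ℝ) :=
  {s | Monotone s ∧ ∀ i, s i ∈ Icc 0 c}

namespace orderedSimplex

variable {n : ℕ} {c : ℝ}

theorem isClosed : IsClosed (orderedSimplex n c) := by
  have h : orderedSimplex n c =
      (⋂ (i) (j) (_ : i ≤ j), {s | s i ≤ s j}) ∩ ⋂ i, (fun s => s i) ⁻¹' Icc 0 c := by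
    ext s; simp [orderedSimplex, Monotone]
  rw [h]
  exact (isClosed_iInter fun i => isClosed_iInter fun j => isClosed_iInter fun _ =>
    isClosed_le (continuous_apply i) (continuous_apply j)).inter
    (isClosed_iInter fun i => isClosed_Icc.preimage (continuous_apply i))

theorem isCompact : IsCompact (orderedSimplex n c) :=
  (isCompact_univ_pi fun _ => isCompact_Icc).of_isClosed_subset isClosed
    fun _ hs i _ => hs.2 i

theorem snoc_mem_iff {x : ℝ} {t : Fin n → ℝ} :
    (Fin.snoc t x : Fin (n + 1) → ℝ) ∈ orderedSimplex (n + 1) c ↔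
      x ∈ Icc 0 c ∧ t ∈ orderedSimplex n x := by
  simp only [orderedSimplex, mem_ofPred_eq, Fin.monotone_snoc_iff, Fin.forall_fin_succ',
    Fin.snoc_castSucc, Fin.snoc_last, mem_Icc]
  constructor
  · rintro ⟨⟨ht, htx⟩, hnn, hx⟩
    exact ⟨hx, ht, fun i => ⟨(hnn i).1, htx i⟩⟩
  · rintro ⟨hx, ht, htx⟩
    exact ⟨⟨ht, fun i => (htx i).2⟩, fun i => ⟨(htx i).1, (htx i).2.trans hx.2⟩, hx⟩

theorem integral_indicator_snoc (x : ℝ) (f : (Fin (n + 1) → ℝ) → ℝ) :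
    ∫ t, (orderedSimplex (n + 1) c).indicator f (Fin.snoc t x) =
      (Icc 0 c).indicator (fun x => ∫ t in orderedSimplex n x, f (Fin.snoc t x)) x := by
  by_cases hx : x ∈ Icc 0 c
  · rw [indicator_of_mem hx, ← integral_indicator isClosed.measurableSet]
    congr with t
    by_cases ht : t ∈ orderedSimplex n x <;> simp [snoc_mem_iff, hx, ht]
  · simp [snoc_mem_iff, hx]

theorem setIntegral_succ {f : (Fin (n + 1) → ℝ) → ℝ}
    (hf : IntegrableOn f (orderedSimplex (n + 1) c)) :
    ∫ s in orderedSimplex (n + 1) c, f s =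
      ∫ x in Icc 0 c, ∫ t in orderedSimplex n x, f (Fin.snoc t x) := by
  rw [← integral_indicator isClosed.measurableSet,
    Fin.integral_snoc (hf.integrable_indicator isClosed.measurableSet)]
  simp_rw [integral_indicator_snoc]
  rw [integral_indicator measurableSet_Icc]

theorem integrableOn_monomial (ν : Fin n → ℕ) :
    IntegrableOn (fun s => ∏ k, s k ^ ν k) (orderedSimplex n c) :=
  (continuous_finsetProd _ fun k _ => (continuous_apply k).pow (ν k)).continuousOn
    |>.integrableOn_compact isCompact

theorem integral_monomial (ν : Fin n → ℕ) (hc : 0 ≤ c) :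
    ∫ s in orderedSimplex n c, ∏ k, s k ^ ν k =
      c ^ (∑ j, (ν j + 1)) / ((∏ k, ∑ j ∈ Finset.Iic k, (ν j + 1) : ℕ) : ℝ) := by
  induction n generalizing c with
  | zero => simp [orderedSimplex, Subsingleton.monotone, measureReal_def, volume_pi]
  | succ n ih =>
    set m := ∑ j : Fin n, (ν j.castSucc + 1)
    set D : ℝ := ((∏ k : Fin n, ∑ j ∈ Finset.Iic k, (ν j.castSucc + 1) : ℕ) : ℝ)
    have hsum : ∑ j, (ν j + 1) = ν (Fin.last n) + m + 1 := by
      rw [Fin.sum_univ_castSucc]; ring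
    calc ∫ s in orderedSimplex (n + 1) c, ∏ k, s k ^ ν k
        = ∫ x in Icc 0 c, ∫ t in orderedSimplex n x,
            ∏ k, (Fin.snoc t x : Fin (n + 1) → ℝ) k ^ ν k :=
          setIntegral_succ (integrableOn_monomial ν)
      _ = ∫ x in Icc 0 c, x ^ (ν (Fin.last n) + m) / D := by
          refine setIntegral_congr_fun measurableSet_Icc fun x hx => ?_
          simp_rw [Fin.prod_univ_castSucc, Fin.snoc_castSucc, Fin.snoc_last]
          rw [integral_mul_const, ih _ hx.1, pow_add]
          ring
      _ = c ^ (ν (Fin.last n) + m + 1) / (ν (Fin.last n) + m + 1) / D := by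
          rw [integral_Icc_eq_integral_Ioc, ← intervalIntegral.integral_of_le hc,
            intervalIntegral.integral_div, integral_pow]
          simp
      _ = _ := by
          rw [Fin.prod_sum_Iic_succ, hsum, Nat.cast_mul, Nat.cast_add_one, Nat.cast_add, div_div,
            mul_comm]

end orderedSimplex

theorem integral_monomial_ordered_simplex_general (n : ℕ) (ν : Fin n → ℕ) :
    ∫ s in {s : Fin n → ℝ | Monotone s ∧ ∀ i, s i ∈ Set.Icc (0 : ℝ) 1},
        ∏ k, s k ^ ν k =
      ((∏ k : Fin n, (∑ j ∈ Finset.Iic k, (ν j + 1)) : ℕ) : ℝ)⁻¹ := by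
  have h := orderedSimplex.integral_monomial ν zero_le_one
  rwa [one_pow, one_div] at h

/-- The Lebesgue integral of `∏ s_k^{ν_k}` over the ordered simplex
`{ 0 ≤ s_1 ≤ ⋯ ≤ s_n ≤ 1 }` equals `1 / ∏ μ_k`, where `μ_k = ∑_{j ≤ k} (ν_j + 1)`. -/
theorem integral_monomial_ordered_simplex (n : ℕ) (hn : 1 ≤ n) (ν : Fin n → ℕ) :
    ∫ s in {s : Fin n → ℝ | Monotone s ∧ ∀ i, s i ∈ Set.Icc (0 : ℝ) 1},
        ∏ k, s k ^ ν k =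
      ((∏ k : Fin n, (∑ j ∈ Finset.Iic k, (ν j + 1)) : ℕ) : ℝ)⁻¹ :=
  integral_monomial_ordered_simplex_general n ν
end

section
/- Let K be a field of characteristic zero and σ : I → J a surjective map of finite nonempty sets. Define a K-linear map σ_* : K[t_i : i∈I] → K[t_j : j∈J] on the divided monomial basis by σ_*(t^{[ν]}) = t^{[σ_*(ν+1)−1]}, where t^{[ν]} = (∏_i t_i^{ν_i})/(∏_i ν_i!) and (σ_*μ)(j) = ∑_{σ(i)=j} μ(i) for μ : I → ℕ. Then: (a) σ_*((∑_{i∈I} t_i)·f) = (∑_{j∈J} t_j)·σ_*(f) for all f, so σ_* descends to a map P_I → P_J of the quotient rings P_I = K[t_i]/(1−∑_i t_i); and (b) ∫_J σ_*(f) = ∫_I f for all f ∈ K[t_i : i∈I]. -/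
/-- For `σ : I → J` and a multi-index `ν : I → ℕ`, the multi-index
`σ_*(ν + 1) - 1 : J → ℕ`, i.e. `j ↦ (∑_{σ i = j} (ν i + 1)) - 1`. -/
noncomputable def pushExp {I J : Type*} [Fintype I] [DecidableEq J] [Finite J]
    (σ : I → J) (ν : I →₀ ℕ) : J →₀ ℕ :=
  Finsupp.equivFunOnFinite.symm fun j =>
    (∑ i ∈ Finset.univ.filter fun i => σ i = j, (ν i + 1)) - 1

/-- The `K`-linear map `σ_* : K[t_i : i ∈ I] → K[t_j : j ∈ J]` defined on the divided
monomial basis by `σ_*(t^{[ν]}) = t^{[σ_*(ν+1)−1]}`. -/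
noncomputable def sigmaLower (K : Type*) [Field K] [CharZero K] {I J : Type*}
    [Fintype I] [Fintype J] [DecidableEq J] (σ : I → J)
    (f : MvPolynomial I K) : MvPolynomial J K :=
  ∑ ν ∈ f.support,
    (f.coeff ν * (((∏ i, Nat.factorial (ν i) : ℕ) : K) /
        ((∏ j, Nat.factorial (pushExp σ ν j) : ℕ) : K))) •
      MvPolynomial.monomial (pushExp σ ν) (1 : K)

open MvPolynomial Finset

/-! Work in the divided-power basis and write `ν' = σ_*(ν + 1) - 1`. Multiplication by `t_i`
sends `t^{[ν]}` to `(ν_i + 1) t^{[ν + e_i]}`, and `(ν + e_i)' = ν' + e_{σ i}`. Collecting the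
terms over the fibre of `σ` above `j` produces the factor `∑_{σ i = j} (ν_i + 1) = ν'_j + 1`,
which is what multiplication by `t_j` gives: this is (a). For (b), `∫_I t^{[ν]}` depends only
on `n + |ν| = |ν + 1| - 1`, and `σ_*` preserves `|ν + 1|`. -/

/-- `t^{[ν]} = t^ν / prodFactorial ν`. -/
def prodFactorial {ι : Type*} [Fintype ι] (ν : ι →₀ ℕ) : ℕ :=
  ∏ i, (ν i).factorial

lemma prodFactorial_add_single {ι : Type*} [Fintype ι] (ν : ι →₀ ℕ) (i : ι) :
    prodFactorial (ν + Finsupp.single i 1) = (ν i + 1) * prodFactorial ν := by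
  classical
  have h : ∀ k, ((ν + Finsupp.single i 1 : ι →₀ ℕ) k).factorial
      = (if i = k then ν i + 1 else 1) * (ν k).factorial := by
    intro k
    rw [Finsupp.add_apply, Finsupp.single_apply]
    split_ifs with hik
    · rw [← hik, Nat.factorial_succ]
    · simp
  simp only [prodFactorial, h, prod_mul_distrib, prod_ite_eq, mem_univ, if_true]

lemma prodFactorial_pos {ι : Type*} [Fintype ι] (ν : ι →₀ ℕ) : 0 < prodFactorial ν :=
  prod_pos fun i _ => (ν i).factorial_pos

section DividedMonomial

variable {K : Type*} [Field K] {ι : Type*} [Fintype ι]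

/-- The divided monomial `a t^{[ν]}`. -/
noncomputable def dividedMonomial (ν : ι →₀ ℕ) (a : K) : MvPolynomial ι K :=
  monomial ν (a / prodFactorial ν)

lemma monomial_eq_dividedMonomial [CharZero K] (ν : ι →₀ ℕ) (a : K) :
    monomial ν a = dividedMonomial ν (a * prodFactorial ν) := by
  rw [dividedMonomial, mul_div_cancel_right₀ _ (by exact_mod_cast (prodFactorial_pos ν).ne')]

lemma dividedMonomial_sum {A : Type*} (ν : ι →₀ ℕ) (s : Finset A) (a : A → K) :
    dividedMonomial ν (∑ x ∈ s, a x) = ∑ x ∈ s, dividedMonomial ν (a x) := by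
  simp only [dividedMonomial, sum_div, map_sum]

lemma X_mul_dividedMonomial [CharZero K] (ν : ι →₀ ℕ) (i : ι) (a : K) :
    X i * dividedMonomial ν a = dividedMonomial (ν + Finsupp.single i 1) (a * (ν i + 1)) := by
  have hν : (prodFactorial ν : K) ≠ 0 := by exact_mod_cast (prodFactorial_pos ν).ne'
  rw [dividedMonomial, dividedMonomial, monomial_add_single, pow_one, mul_comm,
    prodFactorial_add_single]
  congr 2
  push_cast
  field_simp

end DividedMonomial

lemma one_le_sum_add_one_of_mem {ι : Type*} (f : ι → ℕ) {s : Finset ι} {i : ι} (hi : i ∈ s) :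
    1 ≤ ∑ k ∈ s, (f k + 1) :=
  (Nat.le_add_left 1 (f i)).trans
    (single_le_sum (f := fun k => f k + 1) (fun _ _ => Nat.zero_le _) hi)

section PushExp

variable {I J : Type*} [Fintype I] [Fintype J] [DecidableEq J] {σ : I → J}

lemma pushExp_apply (ν : I →₀ ℕ) (j : J) :
    pushExp σ ν j = (∑ i ∈ univ with σ i = j, (ν i + 1)) - 1 := rfl

lemma pushExp_add_one (hσ : Function.Surjective σ) (ν : I →₀ ℕ) (j : J) :
    pushExp σ ν j + 1 = ∑ i ∈ univ with σ i = j, (ν i + 1) := by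
  obtain ⟨i, hi⟩ := hσ j
  have : 1 ≤ ∑ k ∈ univ with σ k = j, (ν k + 1) :=
    one_le_sum_add_one_of_mem _ (i := i) (by simp [hi])
  rw [pushExp_apply]
  omega

lemma pushExp_add_single (ν : I →₀ ℕ) (i : I) :
    pushExp σ (ν + Finsupp.single i 1) = pushExp σ ν + Finsupp.single (σ i) 1 := by
  classical
  ext j
  have hfiber : ∑ k ∈ univ with σ k = j, ((ν + Finsupp.single i 1 : I →₀ ℕ) k + 1)
      = ∑ k ∈ univ with σ k = j, (ν k + 1) + if σ i = j then 1 else 0 := by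
    simp only [Finsupp.add_apply, Finsupp.single_apply, add_right_comm _ _ 1, sum_add_distrib,
      sum_ite_eq, mem_filter, mem_univ, true_and]
  rw [Finsupp.add_apply, Finsupp.single_apply, pushExp_apply, pushExp_apply, hfiber]
  split_ifs with h
  · have : 1 ≤ ∑ k ∈ univ with σ k = j, (ν k + 1) :=
      one_le_sum_add_one_of_mem _ (i := i) (by simp [h])
    omega
  · rfl

lemma card_sub_one_add_sum_pushExp (hσ : Function.Surjective σ) (ν : I →₀ ℕ) :
    Fintype.card J - 1 + ∑ j, pushExp σ ν j = Fintype.card I - 1 + ∑ i, ν i := by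
  have hsum : ∑ j, (pushExp σ ν j + 1) = ∑ i, (ν i + 1) := by
    simp only [pushExp_add_one hσ, sum_fiberwise]
  simp only [sum_add_distrib, sum_const, card_univ, smul_eq_mul, mul_one] at hsum
  have hempty : Fintype.card J = 0 ↔ Fintype.card I = 0 := by
    simp only [Fintype.card_eq_zero_iff, isEmpty_iff]
    exact ⟨fun hJ i => hJ (σ i), fun hI j => hI (hσ j).choose⟩
  omega

end PushExp

section SigmaLower

variable {K : Type*} [Field K] [CharZero K] {I J : Type*} [Fintype I] [Fintype J]
  [DecidableEq J] {σ : I → J}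

lemma sigmaLower_eq_sum (f : MvPolynomial I K) :
    sigmaLower K σ f = (AddMonoidAlgebra.coeff f).sum fun ν a =>
      dividedMonomial (pushExp σ ν) (a * prodFactorial ν) := by
  refine sum_congr rfl fun ν _ => ?_
  rw [smul_monomial, smul_eq_mul, mul_one, ← mul_div_assoc]
  rfl

lemma sigmaLower_add (f g : MvPolynomial I K) :
    sigmaLower K σ (f + g) = sigmaLower K σ f + sigmaLower K σ g := by
  simp only [sigmaLower_eq_sum]
  exact Finsupp.sum_add_index' (by simp [dividedMonomial]) fun ν a b => by
    rw [add_mul, dividedMonomial, dividedMonomial, dividedMonomial, add_div, map_add]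

lemma sigmaLower_sum {A : Type*} (s : Finset A) (f : A → MvPolynomial I K) :
    sigmaLower K σ (∑ x ∈ s, f x) = ∑ x ∈ s, sigmaLower K σ (f x) :=
  map_sum (AddMonoidHom.mk' (sigmaLower K σ) sigmaLower_add) f s

lemma sigmaLower_dividedMonomial (ν : I →₀ ℕ) (a : K) :
    sigmaLower K σ (dividedMonomial ν a) = dividedMonomial (pushExp σ ν) a := by
  rw [sigmaLower_eq_sum, dividedMonomial, sum_monomial_eq (by simp [dividedMonomial]),
    div_mul_cancel₀ _ (by exact_mod_cast (prodFactorial_pos ν).ne')]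

lemma sigmaLower_sum_X_mul_dividedMonomial (hσ : Function.Surjective σ)
    (ν : I →₀ ℕ) (a : K) :
    sigmaLower K σ ((∑ i, X i) * dividedMonomial ν a)
      = (∑ j, X j) * sigmaLower K σ (dividedMonomial ν a) := by
  have hfiber (j : J) : ∑ i ∈ univ with σ i = j, a * (ν i + 1) = a * (pushExp σ ν j + 1) := by
    rw [← mul_sum]
    congr 1
    exact_mod_cast (pushExp_add_one hσ ν j).symm
  calc sigmaLower K σ ((∑ i, X i) * dividedMonomial ν a)
      = ∑ i, dividedMonomial (pushExp σ ν + Finsupp.single (σ i) 1) (a * (ν i + 1)) := by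
        simp only [sum_mul, X_mul_dividedMonomial, sigmaLower_sum, sigmaLower_dividedMonomial,
          pushExp_add_single]
    _ = ∑ j, dividedMonomial (pushExp σ ν + Finsupp.single j 1) (a * (pushExp σ ν j + 1)) := by
        rw [← sum_fiberwise univ σ]
        refine sum_congr rfl fun j _ => ?_
        rw [← hfiber, dividedMonomial_sum]
        exact sum_congr rfl fun i hi => by rw [(mem_filter.mp hi).2]
    _ = (∑ j, X j) * sigmaLower K σ (dividedMonomial ν a) := by
        simp only [sigmaLower_dividedMonomial, sum_mul, X_mul_dividedMonomial]

theorem sigmaLower_sum_X_mul (hσ : Function.Surjective σ) (f : MvPolynomial I K) :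
    sigmaLower K σ ((∑ i, X i) * f) = (∑ j, X j) * sigmaLower K σ f := by
  induction f using MvPolynomial.induction_on' with
  | monomial ν a =>
    rw [monomial_eq_dividedMonomial, sigmaLower_sum_X_mul_dividedMonomial hσ]
  | add f g hf hg => rw [mul_add, sigmaLower_add, sigmaLower_add, hf, hg, mul_add]

end SigmaLower

section SimplexIntegral

variable {K : Type*} [Field K] [CharZero K] {ι : Type*} [Fintype ι]

lemma simplexIntegral_eq_sum (n : ℕ) (f : MvPolynomial ι K) :
    simplexIntegral K n f =
      (AddMonoidAlgebra.coeff f).sum fun ν a =>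
        a * prodFactorial ν / (n + ∑ i, ν i).factorial := by
  refine sum_congr rfl fun ν _ => ?_
  rw [← mul_div_assoc]
  rfl

lemma simplexIntegral_add (n : ℕ) (f g : MvPolynomial ι K) :
    simplexIntegral K n (f + g) = simplexIntegral K n f + simplexIntegral K n g := by
  simp only [simplexIntegral_eq_sum]
  exact Finsupp.sum_add_index' (by simp) fun ν a b => by rw [add_mul, add_div]

lemma simplexIntegral_dividedMonomial (n : ℕ) (ν : ι →₀ ℕ) (a : K) :
    simplexIntegral K n (dividedMonomial ν a) = a / (n + ∑ i, ν i).factorial := by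
  rw [simplexIntegral_eq_sum, dividedMonomial, sum_monomial_eq (by simp),
    div_mul_cancel₀ _ (by exact_mod_cast (prodFactorial_pos ν).ne')]

variable {I J : Type*} [Fintype I] [Fintype J] [DecidableEq J]

theorem simplexIntegral_sigmaLower {σ : I → J} (hσ : Function.Surjective σ)
    (f : MvPolynomial I K) :
    simplexIntegral K (Fintype.card J - 1) (sigmaLower K σ f) =
      simplexIntegral K (Fintype.card I - 1) f := by
  induction f using MvPolynomial.induction_on' with
  | monomial ν a =>
    rw [monomial_eq_dividedMonomial, sigmaLower_dividedMonomial, simplexIntegral_dividedMonomial,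
      simplexIntegral_dividedMonomial, card_sub_one_add_sum_pushExp hσ]
  | add f g hf hg => rw [sigmaLower_add, simplexIntegral_add, simplexIntegral_add, hf, hg]

end SimplexIntegral

theorem sigmaLower_spec_general (K : Type*) [Field K] [CharZero K] (I J : Type*)
    [Fintype I] [Fintype J] [DecidableEq J]
    (σ : I → J) (hσ : Function.Surjective σ) :
    (∀ f : MvPolynomial I K,
        sigmaLower K σ ((∑ i, MvPolynomial.X i) * f) =
          (∑ j, MvPolynomial.X j) * sigmaLower K σ f) ∧
    (∀ f : MvPolynomial I K,
        simplexIntegral K (Fintype.card J - 1) (sigmaLower K σ f) =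
          simplexIntegral K (Fintype.card I - 1) f) :=
  ⟨sigmaLower_sum_X_mul hσ, simplexIntegral_sigmaLower hσ⟩

/-- (a) `σ_*((∑ t_i) · f) = (∑ t_j) · σ_*(f)`, so `σ_*` descends to `P_I → P_J`;
(b) `∫_J σ_*(f) = ∫_I f`. -/
theorem sigmaLower_spec (K : Type*) [Field K] [CharZero K] (I J : Type*)
    [Fintype I] [Fintype J] [DecidableEq J] [Nonempty I] [Nonempty J]
    (σ : I → J) (hσ : Function.Surjective σ) :
    (∀ f : MvPolynomial I K,
        sigmaLower K σ ((∑ i, MvPolynomial.X i) * f) =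
          (∑ j, MvPolynomial.X j) * sigmaLower K σ f) ∧
    (∀ f : MvPolynomial I K,
        simplexIntegral K (Fintype.card J - 1) (sigmaLower K σ f) =
          simplexIntegral K (Fintype.card I - 1) f) :=
  sigmaLower_spec_general K I J σ hσ
end

section
/- Let K be a field of characteristic zero, m ≥ 0, and R = K[t_1,…,t_m]. Let C_* be the chain complex with C_k = R ⊗_K Λ^k(K^m) for 0 ≤ k ≤ m (where K^m has basis w_1,…,w_m) and C_k = 0 otherwise, with differential d : C_k → C_{k−1} given on basis elements by d(f ⊗ w_{i_1}∧⋯∧w_{i_k}) = ∑_{r=1}^k (−1)^{r−1} (∂f/∂t_{i_r}) ⊗ w_{i_1}∧⋯∧ŵ_{i_r}∧⋯∧w_{i_k} for i_1 < ⋯ < i_k (ŵ meaning that factor is omitted). Then H_k(C_*) = 0 for all k ≠ m, and H_m(C_*) is a one-dimensional K-vector space spanned by the class of 1 ⊗ w_1∧⋯∧w_m. -/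
/-!
Write a chain as a family `f S` of polynomials indexed by all subsets `S` of the generators, and
let `ι_r`, `e_s` be interior and exterior multiplication by `w_r`, `w_s`; then `d = ∑ ∂_r ι_r`.
The operator `h = ∑ X_s e_s` is a contracting homotopy up to an invertible factor: from
`ι_r e_s + e_s ι_r = δ_rs` and `∂_r X_s = X_s ∂_r + δ_rs` one gets
`d h + h d = #Sᶜ + ∑ X_i ∂_i` on the `S`-component. On a monomial of degree `n` this is
multiplication by `n + #Sᶜ`, which is nonzero in characteristic zero unless `S` is everything
and `n = 0`. So below the top degree every cycle is a boundary, and a top-degree cycle `f` has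
`∑ X_i ∂_i f = 0`, i.e. it is a constant.
-/


/-- The degree-`k` part of the Koszul-type complex `C_* = K[t_1,…,t_m] ⊗ Λ^*(K^m)`,
encoded as functions from the canonical basis of `Λ^k(K^m)` (the `k`-element subsets of the
`m` generators `w_1, …, w_m`, in increasing order) to `R = K[t_1,…,t_m]`. -/
abbrev KoszulC (K : Type*) [Field K] (m k : ℕ) : Type _ :=
  {s : Finset (Fin m) // s.card = k} → MvPolynomial (Fin m) K

/-- The differential `d : C_{k+1} → C_k`, given on basis elements by
`d(f ⊗ w_{i_1}∧⋯∧w_{i_{k+1}}) = ∑_r (−1)^{r−1} (∂f/∂t_{i_r}) ⊗ w_{i_1}∧⋯∧ŵ_{i_r}∧⋯`. -/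
noncomputable def koszulDiff (K : Type*) [Field K] [CharZero K] (m k : ℕ) :
    KoszulC K m (k + 1) →ₗ[K] KoszulC K m k :=
  LinearMap.pi fun t =>
    ∑ r ∈ (Finset.univ \ t.val).attach,
      ((-1 : K) ^ (t.val.filter fun x => x < r.val).card) •
        ((MvPolynomial.pderiv r.val).toLinearMap.comp
          (LinearMap.proj (⟨insert r.val t.val, by
            have hr : r.val ∉ t.val := (Finset.mem_sdiff.mp r.property).2
            rw [Finset.card_insert_of_notMem hr, t.property]⟩ :
            {s : Finset (Fin m) // s.card = k + 1})))

open Finset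

namespace MvPolynomial

variable {σ R : Type*} [CommSemiring R]

theorem pderiv_pderiv_comm (i j : σ) (p : MvPolynomial σ R) :
    pderiv i (pderiv j p) = pderiv j (pderiv i p) := by
  classical
  ext α
  by_cases hij : i = j
  · rw [hij]
  simp only [coeff_pderiv, add_right_comm α, Finsupp.add_apply, Finsupp.single_apply, hij,
    Ne.symm hij, if_false, add_zero]
  ring

theorem coeff_sum_X_mul_pderiv [Fintype σ] (α : σ →₀ ℕ) (p : MvPolynomial σ R) :
    coeff α (∑ i, X i * pderiv i p) = α.degree * coeff α p := by
  classical
  induction p using MvPolynomial.induction_on' with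
  | monomial β a =>
    rw [(isHomogeneous_monomial a rfl).sum_X_mul_pderiv, coeff_smul, coeff_monomial]
    split_ifs with h <;> simp [h]
  | add p q hp hq => simp only [map_add, mul_add, sum_add_distrib, coeff_add, hp, hq]

variable {K : Type*} [Field K]

/-- The inverse of `p ↦ ∑ i, X i * pderiv i p + c • p` when `c ≠ 0`. For `c = 0` it kills the
constant term, since `0⁻¹ = 0`. -/
noncomputable def eulerShiftInv (c : ℕ) : MvPolynomial σ K →ₗ[K] MvPolynomial σ K :=
  (basisMonomials σ K).constr K fun α => ((α.degree + c : K))⁻¹ • monomial α 1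

theorem coeff_eulerShiftInv (c : ℕ) (α : σ →₀ ℕ) (p : MvPolynomial σ K) :
    coeff α (eulerShiftInv c p) = ((α.degree + c : K))⁻¹ * coeff α p := by
  classical
  induction p using MvPolynomial.induction_on' with
  | monomial β a =>
    have hβ : basisMonomials σ K β = monomial β 1 := by rw [coe_basisMonomials]
    rw [← mul_one a, ← smul_eq_mul, ← smul_monomial, map_smul, eulerShiftInv, ← hβ,
      Module.Basis.constr_basis]
    simp only [coeff_smul, coeff_monomial]
    split_ifs with h <;> simp [h]; ring
  | add p q hp hq => simp only [map_add, coeff_add, hp, hq, mul_add]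

theorem pderiv_eulerShiftInv (c : ℕ) (i : σ) (p : MvPolynomial σ K) :
    pderiv i (eulerShiftInv c p) = eulerShiftInv (c + 1) (pderiv i p) := by
  ext α
  rw [coeff_pderiv, coeff_eulerShiftInv, coeff_eulerShiftInv, coeff_pderiv, map_add,
    Finsupp.degree_single]
  push_cast
  ring

variable [Fintype σ] [CharZero K]

theorem sum_X_mul_pderiv_eulerShiftInv_add {c : ℕ} (hc : c ≠ 0) (p : MvPolynomial σ K) :
    ∑ i, X i * pderiv i (eulerShiftInv c p) + c • eulerShiftInv c p = p := by
  ext α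
  have : (α.degree + c : K) ≠ 0 := by norm_cast; omega
  rw [coeff_add, coeff_sum_X_mul_pderiv, ← Nat.cast_smul_eq_nsmul K, coeff_smul,
    coeff_eulerShiftInv, smul_eq_mul]
  field_simp

theorem eq_C_of_sum_X_mul_pderiv_eq_zero {p : MvPolynomial σ K}
    (h : ∑ i, X i * pderiv i p = 0) : p = C (coeff 0 p) := by
  classical
  ext α
  rw [coeff_C]
  split_ifs with hα
  · rw [hα]
  · have hdeg : (α.degree : K) ≠ 0 := by
      exact_mod_cast (Finsupp.degree_eq_zero_iff α).not.mpr (Ne.symm hα)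
    have h' := coeff_sum_X_mul_pderiv α p
    rw [h, coeff_zero, eq_comm, mul_eq_zero] at h'
    exact h'.resolve_left hdeg

end MvPolynomial

theorem Finset.sum_sum_eq_zero_of_antisymm {ι M : Type*} [Fintype ι] [AddCommGroup M]
    (A : ι → ι → M) (h : ∀ i j, A i j = -A j i) (hd : ∀ i, A i i = 0) :
    ∑ i, ∑ j, A i j = 0 := by
  rw [← sum_product']
  refine sum_involution (fun p _ => p.swap) (fun p _ => by simp [h p.1 p.2])
    (fun p _ hA hswap => hA ?_) (fun p _ => by simp) (fun p _ => Prod.swap_swap p)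
  have hp : p.1 = p.2 := congrArg Prod.snd hswap
  rw [hp, hd]

namespace Koszul

section ExteriorAlgebra

variable {σ R M : Type*} [LinearOrder σ] [CommRing R] [AddCommGroup M] [Module R M]

variable (R) in
/-- `w_r ∧ w_T = sign R T r • w_{insert r T}` for `r ∉ T`, where `w_T` is the increasing
wedge product of the `w_x`, `x ∈ T`. -/
def sign (T : Finset σ) (r : σ) : R := (-1) ^ #{x ∈ T | x < r}

theorem sign_mul_self (T : Finset σ) (r : σ) : sign R T r * sign R T r = 1 := by
  rw [sign, ← mul_pow, neg_one_mul, neg_neg, one_pow]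

theorem sign_insert {a : σ} {T : Finset σ} (ha : a ∉ T) (b : σ) :
    sign R (insert a T) b = (if a < b then -1 else 1) * sign R T b := by
  rw [sign, sign, filter_insert]
  split_ifs
  · rw [card_insert_of_notMem (by simp [ha]), pow_succ, mul_comm]
  · rw [one_mul]

theorem sign_mul_sign_insert {a b : σ} {T : Finset σ} (ha : a ∉ T) (hb : b ∉ T)
    (hab : a ≠ b) :
    sign R T a * sign R (insert a T) b = -(sign R T b * sign R (insert b T) a) := by
  rw [sign_insert ha, sign_insert hb]
  rcases hab.lt_or_gt with h | h <;> simp [h, h.not_gt, mul_comm]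

theorem sign_insert_mul_sign_insert {a b : σ} {T : Finset σ} (ha : a ∉ T) (hb : b ∉ T)
    (hab : a ≠ b) :
    sign R (insert a T) b * sign R (insert b T) a = -(sign R T a * sign R T b) := by
  rw [sign_insert ha, sign_insert hb]
  rcases hab.lt_or_gt with h | h <;> simp [h, h.not_gt, mul_comm]

variable (R) in
/-- A family `f : Finset σ → M` stands for `∑ S, f S ⊗ w_S` in `M ⊗ Λ(R^σ)`; `contract r` is
interior multiplication by `w_r` and `wedge s` is exterior multiplication by `w_s`. -/
def contract (r : σ) : (Finset σ → M) →ₗ[R] (Finset σ → M) where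
  toFun f T := if r ∈ T then 0 else sign R T r • f (insert r T)
  map_add' f g := by ext T; by_cases h : r ∈ T <;> simp [h]
  map_smul' c f := by ext T; by_cases h : r ∈ T <;> simp [h, smul_comm c]

variable (R) in
def wedge (s : σ) : (Finset σ → M) →ₗ[R] (Finset σ → M) where
  toFun f S := if s ∈ S then sign R (S.erase s) s • f (S.erase s) else 0
  map_add' f g := by ext S; by_cases h : s ∈ S <;> simp [h]
  map_smul' c f := by ext S; by_cases h : s ∈ S <;> simp [h, smul_comm c]

theorem contract_apply (r : σ) (f : Finset σ → M) (T : Finset σ) :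
    contract R r f T = if r ∈ T then 0 else sign R T r • f (insert r T) := rfl

theorem wedge_apply (s : σ) (f : Finset σ → M) (S : Finset σ) :
    wedge R s f S = if s ∈ S then sign R (S.erase s) s • f (S.erase s) else 0 := rfl

theorem contract_comp {N : Type*} [AddCommGroup N] [Module R N] (g : M →ₗ[R] N) (r : σ)
    (f : Finset σ → M) : contract R r (fun S => g (f S)) = fun T => g (contract R r f T) := by
  ext T; simp only [contract_apply]; split_ifs <;> simp

theorem wedge_comp {N : Type*} [AddCommGroup N] [Module R N] (g : M →ₗ[R] N) (s : σ)
    (f : Finset σ → M) : wedge R s (fun S => g (f S)) = fun T => g (wedge R s f T) := by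
  ext T; simp only [wedge_apply]; split_ifs <;> simp

theorem contract_contract (r s : σ) (f : Finset σ → M) :
    contract R r (contract R s f) = -contract R s (contract R r f) := by
  ext T
  simp only [contract_apply, Pi.neg_apply, mem_insert]
  by_cases hr : r ∈ T
  · simp [hr]
  by_cases hs : s ∈ T
  · simp [hs]
  by_cases hrs : r = s
  · subst hrs; simp
  simp only [hr, hs, hrs, Ne.symm hrs, or_self, if_false, smul_smul, insert_comm r s,
    sign_mul_sign_insert hr hs hrs, neg_smul]

theorem contract_contract_self (r : σ) (f : Finset σ → M) :
    contract R r (contract R r f) = 0 := by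
  ext T; by_cases hr : r ∈ T <;> simp [contract_apply, hr]

theorem contract_wedge_self_apply (r : σ) (f : Finset σ → M) (S : Finset σ) :
    contract R r (wedge R r f) S = if r ∈ S then 0 else f S := by
  by_cases hr : r ∈ S <;> simp [contract_apply, wedge_apply, hr, smul_smul, sign_mul_self]

theorem contract_wedge_add_wedge_contract (r s : σ) (f : Finset σ → M) :
    contract R r (wedge R s f) + wedge R s (contract R r f) = if r = s then f else 0 := by
  ext T
  simp only [contract_apply, wedge_apply, Pi.add_apply]
  by_cases hrs : r = s
  · subst hrs
    by_cases hr : r ∈ T <;> simp [hr, smul_smul, sign_mul_self]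
  by_cases hr : r ∈ T
  · simp [hr, hrs]
  by_cases hs : s ∈ T
  · obtain ⟨U, hsU, rfl⟩ : ∃ U, s ∉ U ∧ T = insert s U :=
      ⟨T.erase s, notMem_erase s T, (insert_erase hs).symm⟩
    have hrU : r ∉ U := fun h => hr (mem_insert_of_mem h)
    simp [hr, hrs, Ne.symm hrs, hsU, hrU, erase_insert hsU, insert_comm r s, smul_smul,
      sign_insert_mul_sign_insert hsU hrU (Ne.symm hrs)]
  · simp [hr, hs, hrs, Ne.symm hrs]

end ExteriorAlgebra

open MvPolynomial

section Homotopy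

variable {σ R : Type*} [Fintype σ] [LinearOrder σ] [CommRing R]

noncomputable def diff (f : Finset σ → MvPolynomial σ R) : Finset σ → MvPolynomial σ R :=
  fun T => ∑ r, pderiv r (contract R r f T)

noncomputable def homotopy (f : Finset σ → MvPolynomial σ R) : Finset σ → MvPolynomial σ R :=
  fun S => ∑ s, X s * wedge R s f S

theorem diff_eq_sum (f : Finset σ → MvPolynomial σ R) :
    diff f = ∑ r, fun T => (pderiv r).toLinearMap (contract R r f T) := by
  ext T; simp [diff]

theorem contract_diff (r : σ) (f : Finset σ → MvPolynomial σ R) :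
    contract R r (diff f) = ∑ s, fun T => pderiv s (contract R r (contract R s f) T) := by
  simp only [diff_eq_sum, map_sum, contract_comp]
  rfl

theorem wedge_diff (s : σ) (f : Finset σ → MvPolynomial σ R) :
    wedge R s (diff f) = ∑ r, fun T => pderiv r (wedge R s (contract R r f) T) := by
  simp only [diff_eq_sum, map_sum, wedge_comp]
  rfl

theorem contract_homotopy (r : σ) (f : Finset σ → MvPolynomial σ R) :
    contract R r (homotopy f) = ∑ s, fun T => X s * contract R r (wedge R s f) T := by
  have : homotopy f = ∑ s, fun S => LinearMap.mulLeft R (X s) (wedge R s f S) := by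
    ext S; simp [homotopy]
  simp only [this, map_sum, contract_comp]
  rfl

theorem diff_apply_univ (f : Finset σ → MvPolynomial σ R) : diff f univ = 0 :=
  sum_eq_zero fun r _ => by rw [contract_apply, if_pos (mem_univ r), map_zero]

theorem homotopy_zero : homotopy (0 : Finset σ → MvPolynomial σ R) = 0 := by
  ext1 S; simp [homotopy]

theorem diff_diff (f : Finset σ → MvPolynomial σ R) : diff (diff f) = 0 := by
  ext1 T
  simp only [diff, contract_diff, Finset.sum_apply, map_sum]
  refine sum_sum_eq_zero_of_antisymm _ (fun r s => ?_) (fun r => ?_)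
  · rw [contract_contract, Pi.neg_apply, map_neg, map_neg, pderiv_pderiv_comm]
  · rw [contract_contract_self, Pi.zero_apply, map_zero, map_zero]

theorem diff_homotopy_add_homotopy_diff_apply (f : Finset σ → MvPolynomial σ R)
    (S : Finset σ) :
    diff (homotopy f) S + homotopy (diff f) S = #Sᶜ • f S + ∑ i, X i * pderiv i (f S) := by
  have hdh : diff (homotopy f) S = ∑ r, ∑ s, (pderiv r (X s) * contract R r (wedge R s f) S +
      X s * pderiv r (contract R r (wedge R s f) S)) := by
    simp only [diff, contract_homotopy, Finset.sum_apply, map_sum, Derivation.leibniz,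
      smul_eq_mul, add_comm, mul_comm]
  have hhd : homotopy (diff f) S = ∑ r, ∑ s, X s * pderiv r (wedge R s (contract R r f) S) := by
    simp only [homotopy, wedge_diff, Finset.sum_apply, mul_sum]
    exact sum_comm
  rw [hdh, hhd, ← sum_add_distrib]
  simp only [← sum_add_distrib, add_assoc, ← mul_add, ← map_add,
    ← Pi.add_apply (contract R _ _), contract_wedge_add_wedge_contract, pderiv_X, Pi.single_apply]
  simp [sum_add_distrib, ite_mul, contract_wedge_self_apply, ite_apply, sum_ite, filter_not,
    compl_eq_univ_sdiff, apply_ite (pderiv _), mul_ite]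

end Homotopy

section Inverse

variable {σ K : Type*} [Fintype σ] [LinearOrder σ] [Field K]

/-- Inverts `diff ∘ homotopy + homotopy ∘ diff` on the components `S ≠ univ`. -/
noncomputable def laplacianInv (f : Finset σ → MvPolynomial σ K) : Finset σ → MvPolynomial σ K :=
  fun S => eulerShiftInv #Sᶜ (f S)

theorem diff_laplacianInv (f : Finset σ → MvPolynomial σ K) :
    diff (laplacianInv f) = laplacianInv (diff f) := by
  ext1 T
  simp only [diff, laplacianInv, map_sum]
  refine sum_congr rfl fun r _ => ?_
  rw [contract_apply, contract_apply]
  split_ifs with hr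
  · simp
  · have hcard : #(insert r T)ᶜ + 1 = #Tᶜ := by
      rw [compl_insert, card_erase_add_one (mem_compl.mpr hr)]
    simp only [laplacianInv, Derivation.map_smul, map_smul, pderiv_eulerShiftInv, hcard]

theorem diff_homotopy_laplacianInv [CharZero K] {f : Finset σ → MvPolynomial σ K}
    (hf : diff f = 0) {S : Finset σ} (hS : S ≠ univ) :
    diff (homotopy (laplacianInv f)) S = f S := by
  have hc : #Sᶜ ≠ 0 := by simpa [card_eq_zero, compl_eq_empty_iff] using hS
  have h0 : laplacianInv (0 : Finset σ → MvPolynomial σ K) = 0 := by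
    ext1 T; exact map_zero _
  have h := diff_homotopy_add_homotopy_diff_apply (laplacianInv f) S
  rw [diff_laplacianInv, hf, h0, homotopy_zero, Pi.zero_apply, add_zero, add_comm] at h
  rw [h]
  exact sum_X_mul_pderiv_eulerShiftInv_add hc (f S)

end Inverse

section KoszulC

variable {K : Type*} [Field K] {m k : ℕ}

def restrict (k : ℕ) (f : Finset (Fin m) → MvPolynomial (Fin m) K) : KoszulC K m k :=
  fun t => f t.1

noncomputable def extend (c : KoszulC K m k) : Finset (Fin m) → MvPolynomial (Fin m) K :=
  fun S => if h : #S = k then c ⟨S, h⟩ else 0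

theorem restrict_extend (c : KoszulC K m k) : restrict k (extend c) = c := by
  ext1 t; simp [restrict, extend, t.2]

theorem subsingleton_koszulC (h : m < k) : Subsingleton (KoszulC K m k) :=
  ⟨fun _ _ => funext fun t => absurd (t.2 ▸ card_le_univ t.1) (by simpa using h)⟩

theorem diff_extend_apply_of_card_add_one_ne (c : KoszulC K m k) {T : Finset (Fin m)}
    (hT : #T + 1 ≠ k) : diff (extend c) T = 0 := by
  refine sum_eq_zero fun r _ => ?_
  rw [contract_apply]
  split_ifs with hr
  · exact map_zero _
  · rw [extend, dif_neg (by rwa [card_insert_of_notMem hr]), smul_zero, map_zero]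

theorem diff_extend_zero (c : KoszulC K m 0) : diff (extend c) = 0 :=
  funext fun _ => diff_extend_apply_of_card_add_one_ne c (Nat.succ_ne_zero _)

variable [CharZero K]

theorem koszulDiff_restrict (f : Finset (Fin m) → MvPolynomial (Fin m) K) :
    koszulDiff K m k (restrict (k + 1) f) = restrict k (diff f) := by
  ext1 t
  simp only [koszulDiff, LinearMap.pi_apply, LinearMap.coe_sum, LinearMap.coe_smul,
    LinearMap.coe_comp, Derivation.coeFn_coe, LinearMap.coe_proj, Finset.sum_apply, Pi.smul_apply,
    Function.comp_apply, Function.eval, restrict, diff, contract_apply]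
  rw [sum_attach (univ \ t.1) fun r =>
      (-1 : K) ^ #{x ∈ t.1 | x < r} • pderiv r (f (insert r t.1)), sdiff_eq_filter, sum_filter]
  refine sum_congr rfl fun r _ => ?_
  split_ifs <;> simp [sign, Derivation.map_smul]

theorem koszulDiff_koszulDiff (c : KoszulC K m (k + 2)) :
    koszulDiff K m k (koszulDiff K m (k + 1) c) = 0 := by
  rw [← restrict_extend c, koszulDiff_restrict, koszulDiff_restrict, diff_diff]
  rfl

theorem koszulDiff_one : koszulDiff K m k (fun _ => 1) = 0 := by
  have h : diff (fun _ => 1 : Finset (Fin m) → MvPolynomial (Fin m) K) = 0 := by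
    ext1 T; simp [diff, contract_apply, apply_ite (pderiv _)]
  rw [show (fun _ => 1 : KoszulC K m (k + 1)) = restrict (k + 1) (fun _ => 1) from rfl,
    koszulDiff_restrict, h]
  rfl

theorem diff_extend_eq_zero_of_koszulDiff_eq_zero {c : KoszulC K m (k + 1)}
    (hc : koszulDiff K m k c = 0) :
    diff (extend c) = 0 := by
  ext1 T
  by_cases hT : #T = k
  · have h := congrFun (koszulDiff_restrict (k := k) (extend c)) ⟨T, hT⟩
    rwa [restrict_extend, hc, eq_comm] at h
  · exact diff_extend_apply_of_card_add_one_ne c (by omega)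

theorem mem_range_koszulDiff_of_diff_extend_eq_zero (hk : k < m) {c : KoszulC K m k}
    (hc : diff (extend c) = 0) :
    c ∈ LinearMap.range (koszulDiff K m k) := by
  refine ⟨restrict (k + 1) (homotopy (laplacianInv (extend c))), ?_⟩
  rw [koszulDiff_restrict]
  ext1 t
  have ht : t.1 ≠ univ := fun h => by
    have := t.2
    rw [h, card_univ, Fintype.card_fin] at this
    omega
  rw [restrict, diff_homotopy_laplacianInv hc ht, extend, dif_pos t.2]

theorem mem_span_one_of_diff_extend_eq_zero (hk : k = m) {c : KoszulC K m k}
    (hc : diff (extend c) = 0) :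
    c ∈ Submodule.span K {fun _ => 1} := by
  have h := diff_homotopy_add_homotopy_diff_apply (extend c) univ
  rw [diff_apply_univ, hc, homotopy_zero, Pi.zero_apply, add_zero, compl_univ, card_empty,
    zero_smul, zero_add, eq_comm] at h
  rw [Submodule.mem_span_singleton]
  refine ⟨coeff 0 (extend c univ), funext fun t => ?_⟩
  have ht : t.1 = univ := eq_univ_of_card _ (by rw [t.2, hk, Fintype.card_fin])
  have hct : extend c univ = c t := by
    rw [extend, dif_pos (ht ▸ t.2)]
    exact congrArg c (Subtype.ext ht.symm)
  rw [Pi.smul_apply, smul_eq_C_mul, mul_one, ← eq_C_of_sum_X_mul_pderiv_eq_zero h, hct]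

end KoszulC

end Koszul

open Koszul

/-- `H_k(C_*) = 0` for `k ≠ m`, and `H_m(C_*)` is one-dimensional, spanned by the class of
`1 ⊗ w_1∧⋯∧w_m`. -/
theorem koszul_homology (K : Type*) [Field K] [CharZero K] (m : ℕ) :
    (∀ k : ℕ, k + 1 ≠ m →
        LinearMap.ker (koszulDiff K m k) = LinearMap.range (koszulDiff K m (k + 1))) ∧
    (m ≠ 0 → LinearMap.range (koszulDiff K m 0) = ⊤) ∧
    LinearMap.range (koszulDiff K m m) = ⊥ ∧
    (∀ k : ℕ, m = k + 1 →
        LinearMap.ker (koszulDiff K m k) =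
          Submodule.span K {(fun _ => 1 : KoszulC K m (k + 1))}) ∧
    (m = 0 → (⊤ : Submodule K (KoszulC K m 0)) =
        Submodule.span K {(fun _ => 1 : KoszulC K m 0)}) ∧
    (fun _ => 1 : KoszulC K m m) ≠ 0 := by
  refine ⟨fun k hk => ?_, fun hm => ?_, ?_, fun k hm => ?_, fun hm => ?_, fun h => ?_⟩
  · rcases Nat.lt_or_gt_of_ne hk with hlt | hgt
    · refine le_antisymm (fun c hc => ?_) ?_
      · exact mem_range_koszulDiff_of_diff_extend_eq_zero hlt
          (diff_extend_eq_zero_of_koszulDiff_eq_zero hc)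
      · exact LinearMap.range_le_ker_iff.mpr (LinearMap.ext koszulDiff_koszulDiff)
    · have := subsingleton_koszulC (K := K) hgt
      exact Subsingleton.elim _ _
  · exact eq_top_iff.mpr fun c _ =>
      mem_range_koszulDiff_of_diff_extend_eq_zero (Nat.pos_of_ne_zero hm) (diff_extend_zero c)
  · have := subsingleton_koszulC (K := K) (Nat.lt_succ_self m)
    exact LinearMap.range_eq_bot.mpr (LinearMap.ext fun c => by
      rw [Subsingleton.elim c 0, map_zero, LinearMap.zero_apply])
  · refine le_antisymm (fun c hc => ?_) ?_
    · exact mem_span_one_of_diff_extend_eq_zero hm.symm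
        (diff_extend_eq_zero_of_koszulDiff_eq_zero hc)
    · exact (Submodule.span_singleton_le_iff_mem _ _).mpr koszulDiff_one
  · refine (Submodule.eq_top_iff'.mpr fun c => ?_).symm
    exact mem_span_one_of_diff_extend_eq_zero hm.symm (diff_extend_zero c)
  · exact one_ne_zero (congrFun h ⟨univ, by rw [card_univ, Fintype.card_fin]⟩)
end
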